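/- arXiv:1512.07766 — 2 statements merged into one kernel-verified Lean document; each statement's English description precedes it below -/
import Mathlib

section
/- Let a, b be coprime positive integers with a odd, and let φ ∈ ℝ with aφ ≢ 0 mod π. The Lissajous curve {(2cos(at), 2cos(bt+φ)) : t ∈ ℂ} satisfies the polynomial equation T_b(x)² + T_a(y)² − 2cos(aφ)·T_b(x)·T_a(y) − 4sin²(aφ) = 0, i.e., every point (x,y) = (2cos(at), 2cos(bt+φ)) satisfies this equation. -/
open Polynomial Real

/-- The monic Chebyshev polynomials of the first kind (over ℂ). -/
noncomputable def T : ℕ → Polynomial ℂ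
  | 0 => 2
  | 1 => X
  | n + 2 => X * T (n + 1) - T n

lemma T_eval_cos (z : ℂ) : ∀ n : ℕ, (T n).eval (2 * Complex.cos z) = 2 * Complex.cos (n * z)
  | 0 => by simp [T]
  | 1 => by simp [T]
  | n + 2 => by
    simp only [T, eval_sub, eval_mul, eval_X, T_eval_cos z (n + 1), T_eval_cos z n]
    push_cast
    rw [show ((n : ℂ) + 2) * z = ((n + 1) * z) + z by ring,
      show (n : ℂ) * z = ((n + 1) * z) - z by ring, Complex.cos_add, Complex.cos_sub]
    ring

theorem lissajous_curve_equation (a b : ℕ) (hapos : 0 < a) (hbpos : 0 < b)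
    (hab : Nat.Coprime a b) (ha : Odd a) (φ : ℝ)
    (hφ : ∀ k : ℤ, (a : ℝ) * φ ≠ (k : ℝ) * Real.pi)
    (t : ℂ) (x y : ℂ)
    (hx : x = 2 * Complex.cos ((a : ℂ) * t))
    (hy : y = 2 * Complex.cos ((b : ℂ) * t + (φ : ℂ))) :
    ((T b).eval x) ^ 2 + ((T a).eval y) ^ 2 -
      2 * (Real.cos ((a : ℝ) * φ) : ℂ) * ((T b).eval x) * ((T a).eval y) -
      4 * (Real.sin ((a : ℝ) * φ) : ℂ) ^ 2 = 0 := by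
  have h1 : (T b).eval x = 2 * Complex.cos ((b : ℂ) * ((a : ℂ) * t)) := by
    rw [hx, T_eval_cos]
  have h2 : (T a).eval y = 2 * Complex.cos ((a : ℂ) * ((b : ℂ) * t + (φ : ℂ))) := by
    rw [hy, T_eval_cos]
  have hc : ((Real.cos ((a : ℝ) * φ) : ℂ)) = Complex.cos ((a : ℂ) * (φ : ℂ)) := by
    rw [Complex.ofReal_cos]; push_cast; ring_nf
  have hs : ((Real.sin ((a : ℝ) * φ) : ℂ)) = Complex.sin ((a : ℂ) * (φ : ℂ)) := by
    rw [Complex.ofReal_sin]; push_cast; ring_nf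
  have harg : (a : ℂ) * ((b : ℂ) * t + (φ : ℂ)) = (b : ℂ) * ((a : ℂ) * t) + (a : ℂ) * (φ : ℂ) := by
    ring
  rw [h1, h2, hc, hs, harg, Complex.cos_add]
  linear_combination (4 * Complex.sin ((a : ℂ) * (φ : ℂ)) ^ 2) *
      Complex.sin_sq_add_cos_sq ((b : ℂ) * ((a : ℂ) * t)) +
    (-4 * Complex.cos ((b : ℂ) * ((a : ℂ) * t)) ^ 2) *
      Complex.sin_sq_add_cos_sq ((a : ℂ) * (φ : ℂ))
end

section
/- The Lissajous curve x = 2cos(at), y = 2cos(bt + φ), with a, b coprime positive integers, a odd, and aφ ≢ 0 mod π, has exactly 2ab − a − b singular points, and all are real double points. -/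
open Polynomial Real

/-!
Write `u = T_b(x)`, `v = T_a(y)`, `c = cos aφ`, `s = sin aφ`, so that
`F = (v - c u)² + s² (u² - 4)`. At a singular point either `T_b'(x) = 0`, which forces `u = ±2`
and then `v = c u`, or symmetrically `T_a'(y) = 0` and `u = c v`; since `s ≠ 0` the two cases
exclude each other. The critical points of `T_n` are `2 cos (kπ/n)`, `0 < k < n`, with critical
values `2 (-1)^k`, and for `sin β ≠ 0` the equation `T_n(z) = 2 cos β` has the `n` distinct real
solutions `2 cos ((β + 2πj)/n)`. Hence the two cases contribute `(b - 1) a` and `(a - 1) b`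
singular points, all real.
-/

theorem T_eq_chebyshev_C : ∀ n : ℕ, T n = Chebyshev.C ℂ n
  | 0 => by simp [T]
  | 1 => by simp [T]
  | n + 2 => by
    rw [T, T_eq_chebyshev_C (n + 1), T_eq_chebyshev_C n]
    exact_mod_cast (Chebyshev.C_add_two ℂ n).symm

theorem degree_T : ∀ n : ℕ, (T n).degree = n
  | 0 => by simp [T, show (2 : ℂ[X]) = Polynomial.C 2 from rfl]
  | 1 => degree_X
  | n + 2 => by
    have hX : (X * T (n + 1)).degree = ((n + 2 : ℕ) : WithBot ℕ) := by
      rw [degree_mul, degree_X, degree_T (n + 1)]; norm_cast; omega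
    rw [T, degree_sub_eq_left_of_degree_lt (by rw [hX, degree_T n]; norm_cast; omega), hX]

theorem natDegree_T (n : ℕ) : (T n).natDegree = n :=
  natDegree_eq_of_degree_eq_some (degree_T n)

theorem eval_T_two_mul_cos (n : ℕ) (θ : ℂ) :
    (T n).eval (2 * Complex.cos θ) = 2 * Complex.cos (n * θ) := by
  simpa only [T_eq_chebyshev_C, Int.cast_natCast] using Chebyshev.C_two_mul_complex_cos θ n

theorem eval_derivative_T_two_mul_cos_mul_sin (n : ℕ) (θ : ℂ) :
    (T n).derivative.eval (2 * Complex.cos θ) * Complex.sin θ = n * Complex.sin (n * θ) := by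
  have hcomp : HasDerivAt (fun z => (T n).eval (2 * Complex.cos z))
      ((T n).derivative.eval (2 * Complex.cos θ) * (2 * -Complex.sin θ)) θ :=
    ((T n).hasDerivAt _).comp θ ((Complex.hasDerivAt_cos θ).const_mul 2)
  have hcos : HasDerivAt (fun z => 2 * Complex.cos (n * z)) (2 * (-Complex.sin (n * θ) * n)) θ :=
    ((Complex.hasDerivAt_cos _).comp θ ((hasDerivAt_id θ).const_mul (n : ℂ))).const_mul 2
      |>.congr_deriv (by simp)
  simp only [eval_T_two_mul_cos] at hcomp
  linear_combination (-1 / 2 : ℂ) * hcomp.unique hcos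

theorem eval_T_ofReal_two_mul_cos (n : ℕ) (t : ℝ) :
    (T n).eval ((2 * Real.cos t : ℝ) : ℂ) = ((2 * Real.cos (n * t) : ℝ) : ℂ) := by
  push_cast [Complex.ofReal_cos]
  exact eval_T_two_mul_cos n t

theorem isRoot_iff_mem_of_natDegree_le_card {R : Type*} [CommRing R] [IsDomain R] {p : R[X]}
    (hp : p ≠ 0) {s : Finset R} (hs : ∀ r ∈ s, p.IsRoot r) (hcard : p.natDegree ≤ s.card)
    {z : R} : p.IsRoot z ↔ z ∈ s := by
  have hle : s.val ≤ p.roots :=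
    (Multiset.le_iff_subset s.nodup).2 fun r hr => (mem_roots hp).2 (hs r hr)
  rw [← mem_roots hp, ← Multiset.eq_of_le_of_card_le hle ((card_roots' p).trans hcard)]
  rfl

noncomputable def critPt (n k : ℕ) : ℂ := ((2 * Real.cos (k * π / n) : ℝ) : ℂ)

noncomputable def levelPt (n : ℕ) (β : ℝ) (j : ℕ) : ℂ :=
  ((2 * Real.cos ((β + 2 * π * j) / n) : ℝ) : ℂ)

theorem eval_T_critPt {n : ℕ} (hn : n ≠ 0) (k : ℕ) : (T n).eval (critPt n k) = 2 * (-1) ^ k := by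
  rw [critPt, eval_T_ofReal_two_mul_cos, mul_div_cancel₀ _ (by exact_mod_cast hn : (n : ℝ) ≠ 0),
    Real.cos_nat_mul_pi]
  push_cast; ring

theorem eval_T_levelPt {n : ℕ} (hn : n ≠ 0) (β : ℝ) (j : ℕ) :
    (T n).eval (levelPt n β j) = ((2 * Real.cos β : ℝ) : ℂ) := by
  rw [levelPt, eval_T_ofReal_two_mul_cos, mul_div_cancel₀ _ (by exact_mod_cast hn : (n : ℝ) ≠ 0),
    show β + 2 * π * j = β + (j : ℤ) * (2 * π) by push_cast; ring, Real.cos_add_int_mul_two_pi]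

theorem critPt_injOn (n : ℕ) : Set.InjOn (critPt n) (Set.Iic n) := by
  intro k hk l hl h
  rcases Nat.eq_zero_or_pos n with rfl | hn
  · simp_all
  have hangle : ∀ m ∈ Set.Iic n, (m : ℝ) * π / n ∈ Set.Icc 0 π := fun m hm => by
    refine ⟨by positivity, div_le_of_le_mul₀ (by positivity) Real.pi_pos.le ?_⟩
    rw [mul_comm]
    exact mul_le_mul_of_nonneg_left (by exact_mod_cast hm) Real.pi_pos.le
  have hcos := Complex.ofReal_injective h
  have := Real.injOn_cos (hangle k hk) (hangle l hl) (by linarith)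
  field_simp [Real.pi_ne_zero] at this
  exact_mod_cast this

theorem levelPt_injOn (n : ℕ) {β : ℝ} (hβ : Real.sin β ≠ 0) :
    Set.InjOn (levelPt n β) (Set.Iio n) := by
  intro i hi j hj h
  have hcos : Real.cos ((β + 2 * π * i) / n) = Real.cos ((β + 2 * π * j) / n) := by
    have := Complex.ofReal_injective h; linarith
  have hn : (n : ℝ) ≠ 0 := by have : 0 < n := (Nat.zero_le i).trans_lt hi; positivity
  obtain ⟨k, hk | hk⟩ := Real.cos_eq_cos_iff.1 hcos
  · have hdiff : (j : ℤ) - i = k * n := by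
      field_simp at hk
      exact_mod_cast (by nlinarith [Real.pi_pos] : (j : ℝ) - i = k * n)
    have := Int.eq_zero_of_abs_lt_dvd (m := n) (x := j - i) ⟨k, by rw [hdiff, mul_comm]⟩
      (by rw [Set.mem_Iio] at hi hj; rw [abs_lt]; omega)
    omega
  · -- the reflection `y = 2kπ - x` would put `β` in `πℤ`
    refine absurd (Real.sin_eq_zero_iff.2 ⟨k * n - i - j, ?_⟩) hβ
    field_simp at hk
    push_cast
    nlinarith [Real.pi_pos]

theorem isRoot_derivative_T_critPt {n k : ℕ} (hk : k ∈ Finset.Ioo 0 n) :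
    (T n).derivative.IsRoot (critPt n k) := by
  obtain ⟨hk₀, hkn⟩ := Finset.mem_Ioo.1 hk
  have hn : (0 : ℝ) < n := by exact_mod_cast hk₀.trans hkn
  have hsin : Real.sin (k * π / n) ≠ 0 := by
    refine (Real.sin_pos_of_pos_of_lt_pi (by positivity) ?_).ne'
    rw [div_lt_iff₀ hn, mul_comm π]
    exact mul_lt_mul_of_pos_right (by exact_mod_cast hkn) Real.pi_pos
  have h := eval_derivative_T_two_mul_cos_mul_sin n (k * π / n : ℝ)
  rw [← Complex.ofReal_natCast, ← Complex.ofReal_mul, mul_div_cancel₀ _ hn.ne',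
    ← Complex.ofReal_sin, ← Complex.ofReal_sin, Real.sin_nat_mul_pi, Complex.ofReal_zero,
    mul_zero] at h
  have := (mul_eq_zero.1 h).resolve_right (Complex.ofReal_ne_zero.2 hsin)
  simpa [IsRoot, critPt, Complex.ofReal_cos] using this

theorem isRoot_derivative_T_iff {n : ℕ} (hn : 0 < n) {z : ℂ} :
    (T n).derivative.IsRoot z ↔ z ∈ (Finset.Ioo 0 n).image (critPt n) := by
  refine isRoot_iff_mem_of_natDegree_le_card ?_ ?_ ?_
  · rw [Ne, derivative_eq_zero, natDegree_T]; omega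
  · intro r hr
    obtain ⟨k, hk, rfl⟩ := Finset.mem_image.1 hr
    exact isRoot_derivative_T_critPt hk
  · rw [Finset.card_image_of_injOn ((critPt_injOn n).mono fun k hk => ?_), Nat.card_Ioo]
    · exact (natDegree_derivative_le _).trans (by rw [natDegree_T, Nat.sub_zero])
    · exact (Finset.mem_Ioo.1 hk).2.le

theorem eval_T_eq_two_mul_cos_iff {n : ℕ} (hn : 0 < n) {β : ℝ} (hβ : Real.sin β ≠ 0) {z : ℂ} :
    (T n).eval z = ((2 * Real.cos β : ℝ) : ℂ) ↔ z ∈ (Finset.range n).image (levelPt n β) := by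
  have hdeg : (T n - Polynomial.C ((2 * Real.cos β : ℝ) : ℂ)).natDegree = n := by
    rw [natDegree_sub_C, natDegree_T]
  rw [← sub_eq_zero, ← eval_C (a := ((2 * Real.cos β : ℝ) : ℂ)) (x := z), ← eval_sub]
  refine isRoot_iff_mem_of_natDegree_le_card (fun h => ?_) ?_ ?_
  · rw [h, natDegree_zero] at hdeg; omega
  · simp [eval_T_levelPt hn.ne']
  · rw [hdeg, Finset.card_image_of_injOn ((levelPt_injOn n hβ).mono fun j hj => ?_),
      Finset.card_range]
    exact Finset.mem_range.1 hj

theorem sq_eval_T_of_isRoot_derivative {n : ℕ} (hn : 0 < n) {z : ℂ}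
    (hz : (T n).derivative.IsRoot z) : (T n).eval z ^ 2 = 4 := by
  obtain ⟨k, -, rfl⟩ := Finset.mem_image.1 ((isRoot_derivative_T_iff hn).1 hz)
  rw [eval_T_critPt hn.ne', mul_pow, ← pow_mul, pow_mul', neg_one_sq, one_pow]
  norm_num

section Algebra

variable {K : Type*} [Field K] [NeZero (2 : K)] {c s u v du dv : K}

theorem lissajous_singular_iff (hcs : c ^ 2 + s ^ 2 = 1) (hs : s ≠ 0) (hu : du = 0 → u ^ 2 = 4)
    (hv : dv = 0 → v ^ 2 = 4) :
    (u ^ 2 + v ^ 2 - 2 * c * u * v - 4 * s ^ 2 = 0 ∧ du * (2 * u - 2 * c * v) = 0 ∧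
      dv * (2 * v - 2 * c * u) = 0) ↔ (du = 0 ∧ v = c * u) ∨ (dv = 0 ∧ u = c * v) := by
  have hF : u ^ 2 + v ^ 2 - 2 * c * u * v - 4 * s ^ 2 = (v - c * u) ^ 2 + s ^ 2 * (u ^ 2 - 4) := by
    linear_combination (-u ^ 2) * hcs
  have hs2 : (2 : K) * s ^ 2 ≠ 0 := mul_ne_zero two_ne_zero (pow_ne_zero 2 hs)
  constructor
  · rintro ⟨h, hx, hy⟩
    by_cases hdu : du = 0
    · rw [hF, hu hdu, sub_self, mul_zero, add_zero, sq_eq_zero_iff, sub_eq_zero] at h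
      exact Or.inl ⟨hdu, h⟩
    have hu' : u = c * v :=
      mul_left_cancel₀ two_ne_zero (by linear_combination (mul_eq_zero.1 hx).resolve_left hdu)
    refine Or.inr ⟨(mul_eq_zero.1 hy).resolve_right fun hy' => ?_, hu'⟩
    have hv0 : v = 0 := by
      refine (mul_eq_zero.1 (?_ : 2 * s ^ 2 * v = 0)).resolve_left hs2
      linear_combination hy' + 2 * c * hu' + 2 * v * hcs
    rw [hu', hv0] at h
    exact mul_ne_zero two_ne_zero hs2 (by linear_combination -h)
  · rintro (⟨hdu, hv'⟩ | ⟨hdv, hu'⟩)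
    · refine ⟨?_, by rw [hdu, zero_mul], by rw [hv']; ring⟩
      rw [hF, hv', hu hdu]; ring
    · refine ⟨?_, by rw [hu']; ring, by rw [hdv, zero_mul]⟩
      rw [hu']
      linear_combination (1 - c ^ 2) * hv hdv - 4 * hcs

theorem not_eq_mul_and_eq_mul (hcs : c ^ 2 + s ^ 2 = 1) (hs : s ≠ 0) (hu : u ^ 2 = 4) :
    ¬(v = c * u ∧ u = c * v) := by
  rintro ⟨hv', hu'⟩
  have hu0 : u = 0 := by
    refine (mul_eq_zero.1 (?_ : s ^ 2 * u = 0)).resolve_left (pow_ne_zero 2 hs)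
    linear_combination hu' + c * hv' + u * hcs
  rw [hu0] at hu
  exact mul_ne_zero (two_ne_zero (α := K)) two_ne_zero (by linear_combination -hu)

end Algebra

section Deriv

variable {𝕜 : Type*} [NontriviallyNormedField 𝕜] (p : 𝕜[X]) (c d w z : 𝕜)

theorem deriv_eval_sq_add_mul_eval (A B : 𝕜) :
    deriv (fun z => p.eval z ^ 2 + A * p.eval z + B) z = p.derivative.eval z * (2 * p.eval z + A) :=
  ((((p.hasDerivAt z).pow 2).add ((p.hasDerivAt z).const_mul A)).add_const B).deriv.trans
    (by ring)

theorem deriv_eval_sq_add_sq_sub_left :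
    deriv (fun z => p.eval z ^ 2 + w ^ 2 - 2 * c * p.eval z * w - d) z =
      p.derivative.eval z * (2 * p.eval z - 2 * c * w) := by
  convert deriv_eval_sq_add_mul_eval p z (-(2 * c * w)) (w ^ 2 - d) using 2
  · ext; ring
  · ring

theorem deriv_eval_sq_add_sq_sub_right :
    deriv (fun z => w ^ 2 + p.eval z ^ 2 - 2 * c * w * p.eval z - d) z =
      p.derivative.eval z * (2 * p.eval z - 2 * c * w) := by
  convert deriv_eval_sq_add_mul_eval p z (-(2 * c * w)) (w ^ 2 - d) using 2
  · ext; ring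
  · ring

end Deriv

def singularBranch (m n : ℕ) (c : ℂ) : Set (ℂ × ℂ) :=
  {p | (T n).derivative.IsRoot p.1 ∧ (T m).eval p.2 = c * (T n).eval p.1}

section singularBranch

variable {m n : ℕ} {α : ℝ}

theorem sin_add_nat_mul_pi_ne_zero (hα : Real.sin α ≠ 0) (k : ℕ) : Real.sin (α + k * π) ≠ 0 := by
  rw [Real.sin_add_nat_mul_pi]
  exact mul_ne_zero (pow_ne_zero _ (by norm_num)) hα

theorem singularBranch_eq_image (hm : 0 < m) (hn : 0 < n) (hα : Real.sin α ≠ 0) :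
    singularBranch m n (Real.cos α) = ↑(((Finset.Ioo 0 n) ×ˢ (Finset.range m)).image
      fun kj => (critPt n kj.1, levelPt m (α + kj.1 * π) kj.2)) := by
  have hlevel (k : ℕ) :
      (Real.cos α : ℂ) * (T n).eval (critPt n k) = ((2 * Real.cos (α + k * π) : ℝ) : ℂ) := by
    rw [eval_T_critPt hn.ne', Real.cos_add_nat_mul_pi]
    push_cast; ring
  ext ⟨x, y⟩
  simp only [singularBranch, Set.mem_ofPred_eq, Finset.coe_image, Set.mem_image, Finset.mem_coe,
    Finset.mem_product, Prod.exists, Prod.mk.injEq]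
  constructor
  · rintro ⟨hx, hy⟩
    obtain ⟨k, hk, rfl⟩ := Finset.mem_image.1 ((isRoot_derivative_T_iff hn).1 hx)
    rw [hlevel, eval_T_eq_two_mul_cos_iff hm (sin_add_nat_mul_pi_ne_zero hα k)] at hy
    obtain ⟨j, hj, rfl⟩ := Finset.mem_image.1 hy
    exact ⟨k, j, ⟨hk, hj⟩, rfl, rfl⟩
  · rintro ⟨k, j, ⟨hk, -⟩, rfl, rfl⟩
    exact ⟨isRoot_derivative_T_critPt hk, by rw [hlevel, eval_T_levelPt hm.ne']⟩

theorem finite_singularBranch (hm : 0 < m) (hn : 0 < n) (hα : Real.sin α ≠ 0) :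
    (singularBranch m n (Real.cos α)).Finite := by
  rw [singularBranch_eq_image hm hn hα]
  exact Finset.finite_toSet _

theorem ncard_singularBranch (hm : 0 < m) (hn : 0 < n) (hα : Real.sin α ≠ 0) :
    (singularBranch m n (Real.cos α)).ncard = (n - 1) * m := by
  rw [singularBranch_eq_image hm hn hα, Set.ncard_coe_finset, Finset.card_image_of_injOn,
    Finset.card_product, Nat.card_Ioo, Finset.card_range, Nat.sub_zero]
  rintro ⟨k, j⟩ hkj ⟨k', j'⟩ hkj' h
  simp only [Finset.coe_product, Set.mem_prod, Finset.mem_coe, Finset.mem_Ioo, Finset.mem_range,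
    Prod.mk.injEq] at hkj hkj' h
  obtain rfl := critPt_injOn n (Set.mem_Iic.2 hkj.1.2.le) (Set.mem_Iic.2 hkj'.1.2.le) h.1
  rw [levelPt_injOn m (sin_add_nat_mul_pi_ne_zero hα k) hkj.2 hkj'.2 h.2]

theorem im_eq_zero_of_mem_singularBranch (hm : 0 < m) (hn : 0 < n) (hα : Real.sin α ≠ 0)
    {p : ℂ × ℂ} (hp : p ∈ singularBranch m n (Real.cos α)) : p.1.im = 0 ∧ p.2.im = 0 := by
  rw [singularBranch_eq_image hm hn hα, Finset.mem_coe] at hp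
  obtain ⟨⟨k, j⟩, -, rfl⟩ := Finset.mem_image.1 hp
  exact ⟨Complex.ofReal_im _, Complex.ofReal_im _⟩

theorem ncard_singularBranch_union_swap (hm : 0 < m) (hn : 0 < n) (hα : Real.sin α ≠ 0) :
    (singularBranch m n (Real.cos α) ∪ Prod.swap ⁻¹' singularBranch n m (Real.cos α)).ncard =
      2 * m * n - m - n := by
  have hcs : (Real.cos α : ℂ) ^ 2 + (Real.sin α : ℂ) ^ 2 = 1 := by
    exact_mod_cast Real.cos_sq_add_sin_sq α
  have hdisj : Disjoint (singularBranch m n (Real.cos α))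
      (Prod.swap ⁻¹' singularBranch n m (Real.cos α)) :=
    Set.disjoint_left.2 fun p h₁ h₂ => not_eq_mul_and_eq_mul hcs (by exact_mod_cast hα)
      (sq_eval_T_of_isRoot_derivative hn h₁.1) ⟨h₁.2, h₂.2⟩
  rw [Set.ncard_union_eq hdisj (finite_singularBranch hm hn hα)
      ((finite_singularBranch hn hm hα).preimage Prod.swap_injective.injOn),
    Set.ncard_preimage_of_injective_subset_range Prod.swap_injective
      (by rw [Prod.swap_surjective.range_eq]; exact Set.subset_univ _),
    ncard_singularBranch hm hn hα, ncard_singularBranch hn hm hα]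
  obtain ⟨m, rfl⟩ := Nat.exists_eq_add_of_lt hm
  obtain ⟨n, rfl⟩ := Nat.exists_eq_add_of_lt hn
  simp only [zero_add, Nat.add_sub_cancel]
  ring_nf
  omega

end singularBranch

theorem lissajous_singular_points_general (a b : ℕ) (hapos : 0 < a) (hbpos : 0 < b)
    (φ : ℝ)
    (hφ : ∀ k : ℤ, (a : ℝ) * φ ≠ (k : ℝ) * Real.pi)
    (F : ℂ → ℂ → ℂ)
    (hF : ∀ x y : ℂ, F x y =
      ((T b).eval x) ^ 2 + ((T a).eval y) ^ 2 -
        2 * (Real.cos ((a : ℝ) * φ) : ℂ) * ((T b).eval x) * ((T a).eval y) -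
        4 * (Real.sin ((a : ℝ) * φ) : ℂ) ^ 2)
    (S : Set (ℂ × ℂ))
    (hS : S = {p : ℂ × ℂ | F p.1 p.2 = 0 ∧
      deriv (fun x => F x p.2) p.1 = 0 ∧ deriv (fun y => F p.1 y) p.2 = 0}) :
    S.ncard = 2 * a * b - a - b ∧ ∀ p ∈ S, p.1.im = 0 ∧ p.2.im = 0 := by
  set α := (a : ℝ) * φ
  have hα : Real.sin α ≠ 0 := fun h => hφ _ (Real.sin_eq_zero_iff.1 h).choose_spec.symm
  have hSeq : S = singularBranch a b (Real.cos α) ∪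
      Prod.swap ⁻¹' singularBranch b a (Real.cos α) := by
    ext ⟨x, y⟩
    simp only [hS, Set.mem_ofPred_eq, hF, deriv_eval_sq_add_sq_sub_left,
      deriv_eval_sq_add_sq_sub_right]
    exact lissajous_singular_iff (by exact_mod_cast Real.cos_sq_add_sin_sq α) (by exact_mod_cast hα)
      (sq_eval_T_of_isRoot_derivative hbpos) (sq_eval_T_of_isRoot_derivative hapos)
  refine ⟨hSeq ▸ ncard_singularBranch_union_swap hapos hbpos hα, ?_⟩
  rw [hSeq]
  rintro p (hp | hp)
  · exact im_eq_zero_of_mem_singularBranch hapos hbpos hα hp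
  · exact (im_eq_zero_of_mem_singularBranch hbpos hapos hα hp).symm

theorem lissajous_singular_points (a b : ℕ) (hapos : 0 < a) (hbpos : 0 < b)
    (hab : Nat.Coprime a b) (ha : Odd a) (φ : ℝ)
    (hφ : ∀ k : ℤ, (a : ℝ) * φ ≠ (k : ℝ) * Real.pi)
    (F : ℂ → ℂ → ℂ)
    (hF : ∀ x y : ℂ, F x y =
      ((T b).eval x) ^ 2 + ((T a).eval y) ^ 2 -
        2 * (Real.cos ((a : ℝ) * φ) : ℂ) * ((T b).eval x) * ((T a).eval y) -
        4 * (Real.sin ((a : ℝ) * φ) : ℂ) ^ 2)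
    (S : Set (ℂ × ℂ))
    (hS : S = {p : ℂ × ℂ | F p.1 p.2 = 0 ∧
      deriv (fun x => F x p.2) p.1 = 0 ∧ deriv (fun y => F p.1 y) p.2 = 0}) :
    S.ncard = 2 * a * b - a - b ∧ ∀ p ∈ S, p.1.im = 0 ∧ p.2.im = 0 :=
  lissajous_singular_points_general a b hapos hbpos φ hφ F hF S hS
end
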